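/- Let I = {i} be a singleton and suppose the image of a_i in A/M_i is a non-zero-divisor. Then there exists a unique A-algebra morphism φ : A[M_i/a_i] → A/M_i, and its kernel is the ideal of A[M_i/a_i] generated by the fractions {m/a_i : m ∈ M_i}. -/

import Mathlib

open scoped TensorProduct

noncomputable section

variable {A : Type*} [CommRing A] {I : Type*}

/-- The multiplicative submonoid generated by the elements `a_i` of the multi-center. -/
def dilSubmonoid (a : I → A) : Submonoid A := Submonoid.closure (Set.range a)

lemma a_mem_dilSubmonoid (a : I → A) (i : I) : a i ∈ dilSubmonoid a :=
  Submonoid.subset_closure ⟨i, rfl⟩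

/-- `a^ν` for `ν ∈ ⊕_{i∈I} ℕ`. -/
def apow (a : I → A) (ν : I →₀ ℕ) : A := ν.prod fun i n => a i ^ n

lemma apow_mem (a : I → A) (ν : I →₀ ℕ) : apow a ν ∈ dilSubmonoid a :=
  Submonoid.prod_mem _ fun i _ => pow_mem (a_mem_dilSubmonoid a i) _

/-- The product ideal `L^ν = ∏_i (M_i + (a_i))^{ν_i}`. -/
def Lpow (M : I → Ideal A) (a : I → A) (ν : I →₀ ℕ) : Ideal A :=
  ν.prod fun i n => (M i + Ideal.span {a i}) ^ n

/-- The fraction `m / a_i` in the localization at the submonoid generated by the `a_i`. -/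
def dilFrac (a : I → A) (i : I) (m : A) : Localization (dilSubmonoid a) :=
  Localization.mk m ⟨a i, a_mem_dilSubmonoid a i⟩

/-- The multi-centered dilatation `A[{M_i/a_i}]`, realized as the sub-`A`-algebra of the
localization `S⁻¹A` generated by the fractions `m / a_i` with `m ∈ M_i`. -/
def dilatation (M : I → Ideal A) (a : I → A) :
    Subalgebra A (Localization (dilSubmonoid a)) :=
  Algebra.adjoin A (⋃ i, dilFrac a i '' (M i))

/-! Every element of `A[M/a]` is congruent modulo the fractions `m/a` to an element of `A`
(they generate it as an `A`-algebra), and `a • (m/a) = m`. Since `ā` is a non-zero-divisor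
in `A/M`, every `A`-algebra map `A[M/a] → A/M` therefore kills the fractions, so it is
determined by its restriction to `A`, and its kernel is the ideal `J` they generate:
if `x ≡ c mod J` maps to `0`, then `c ∈ M`, and `c = a • (c/a) ∈ J`.
Such a map exists because the localization map `S⁻¹A → (A/M)[1/ā]` kills the fractions,
hence sends `A[M/a]` into the image of `A/M`, and `A/M → (A/M)[1/ā]` is injective. -/

section MultiCenter

variable (M : I → Ideal A) (a : I → A)

lemma dilFrac_mem_dilatation {i : I} {m : A} (hm : m ∈ M i) : dilFrac a i m ∈ dilatation M a :=
  Algebra.subset_adjoin (Set.mem_iUnion.2 ⟨i, Set.mem_image_of_mem _ hm⟩)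

lemma algebraMap_mul_dilFrac (i : I) (m : A) :
    algebraMap A _ (a i) * dilFrac a i m = algebraMap A _ m := by
  rw [dilFrac, Localization.mk_eq_mk']
  exact IsLocalization.mk'_spec' (Localization (dilSubmonoid a)) m _

def dilFracSpan : Ideal (dilatation M a) :=
  Ideal.span {x | ∃ i, ∃ m ∈ M i, (x : Localization (dilSubmonoid a)) = dilFrac a i m}

lemma algebraMap_mem_dilFracSpan {i : I} {m : A} (hm : m ∈ M i) :
    algebraMap A (dilatation M a) m ∈ dilFracSpan M a := by
  have hfrac : algebraMap A (dilatation M a) m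
      = algebraMap A (dilatation M a) (a i) * ⟨dilFrac a i m, dilFrac_mem_dilatation M a hm⟩ :=
    Subtype.ext (algebraMap_mul_dilFrac a i m).symm
  rw [hfrac]
  exact Ideal.mul_mem_left _ _ (Ideal.subset_span ⟨i, m, hm, rfl⟩)

lemma exists_sub_algebraMap_mem_dilFracSpan (x : dilatation M a) :
    ∃ c : A, x - algebraMap A _ c ∈ dilFracSpan M a := by
  have hx :
      x ∈ Algebra.adjoin A (((↑) : dilatation M a → _) ⁻¹' ⋃ i, dilFrac a i '' M i) :=
    eq_top_iff.1 (Algebra.adjoin_adjoin_coe_preimage (R := A)) Algebra.mem_top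
  induction hx using Algebra.adjoin_induction with
  | mem x hx =>
    obtain ⟨i, m, hm, hxm⟩ := by
      simpa only [Set.mem_preimage, Set.mem_iUnion, Set.mem_image] using hx
    refine ⟨0, ?_⟩
    rw [map_zero, sub_zero]
    exact Ideal.subset_span ⟨i, m, hm, hxm.symm⟩
  | algebraMap r => exact ⟨r, by simp⟩
  | add x y _ _ hcx hcy =>
    obtain ⟨c, hc⟩ := hcx
    obtain ⟨d, hd⟩ := hcy
    refine ⟨c + d, ?_⟩
    convert add_mem hc hd using 1
    rw [map_add]; ring
  | mul x y _ _ hcx hcy =>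
    obtain ⟨c, hc⟩ := hcx
    obtain ⟨d, hd⟩ := hcy
    refine ⟨c * d, ?_⟩
    convert add_mem (Ideal.mul_mem_left _ x hd) (Ideal.mul_mem_right (algebraMap A _ d) _ hc)
      using 1
    rw [map_mul]; ring

lemma algHom_ext_of_dilFracSpan_le_ker {B : Type*} [Ring B] [Algebra A B]
    {φ ψ : dilatation M a →ₐ[A] B} (hφ : dilFracSpan M a ≤ RingHom.ker φ)
    (hψ : dilFracSpan M a ≤ RingHom.ker ψ) : φ = ψ := by
  ext x
  obtain ⟨c, hc⟩ := exists_sub_algebraMap_mem_dilFracSpan M a x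
  have hφc : φ x = φ (algebraMap A _ c) := sub_eq_zero.1 (by simpa using hφ hc)
  have hψc : ψ x = ψ (algebraMap A _ c) := sub_eq_zero.1 (by simpa using hψ hc)
  rw [hφc, hψc, AlgHom.commutes, AlgHom.commutes]

lemma dilFracSpan_le_ker {B : Type*} [CommRing B] [Algebra A B]
    (ha : ∀ i, algebraMap A B (a i) ∈ nonZeroDivisors B)
    (hM : ∀ i, M i ≤ RingHom.ker (algebraMap A B)) (φ : dilatation M a →ₐ[A] B) :
    dilFracSpan M a ≤ RingHom.ker φ := by
  refine Ideal.span_le.2 ?_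
  rintro x ⟨i, m, hm, hx⟩
  have hax : algebraMap A (dilatation M a) (a i) * x = algebraMap A _ m :=
    Subtype.ext (by rw [Subalgebra.coe_mul, hx]; exact algebraMap_mul_dilFrac a i m)
  have hφ := congrArg φ hax
  rw [map_mul, AlgHom.commutes, AlgHom.commutes, RingHom.mem_ker.1 (hM i hm)] at hφ
  exact (ha i).1 _ hφ

end MultiCenter

section MonoCenter

variable (M : Ideal A) (a : A)

abbrev monoDilatation : Subalgebra A (Localization (dilSubmonoid fun _ : Unit => a)) :=
  dilatation (fun _ : Unit => M) (fun _ : Unit => a)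

variable {M a}

lemma dilFracSpan_le_ker_quotient (h : Ideal.Quotient.mk M a ∈ nonZeroDivisors (A ⧸ M))
    (φ : monoDilatation M a →ₐ[A] A ⧸ M) :
    dilFracSpan (fun _ : Unit => M) (fun _ : Unit => a) ≤ RingHom.ker φ :=
  dilFracSpan_le_ker _ _ (fun _ => h)
    (fun _ => by rw [Ideal.Quotient.algebraMap_eq, Ideal.mk_ker]) φ

lemma ker_eq_dilFracSpan (h : Ideal.Quotient.mk M a ∈ nonZeroDivisors (A ⧸ M))
    (φ : monoDilatation M a →ₐ[A] A ⧸ M) :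
    RingHom.ker φ = dilFracSpan (fun _ : Unit => M) (fun _ : Unit => a) := by
  refine le_antisymm (fun x hx => ?_) (dilFracSpan_le_ker_quotient h φ)
  obtain ⟨c, hc⟩ := exists_sub_algebraMap_mem_dilFracSpan _ _ x
  have hφc : φ (algebraMap A _ c) = 0 := by
    simpa [RingHom.mem_ker.1 hx] using dilFracSpan_le_ker_quotient h φ hc
  rw [AlgHom.commutes, Ideal.Quotient.algebraMap_eq, Ideal.Quotient.eq_zero_iff_mem] at hφc
  simpa using add_mem hc (algebraMap_mem_dilFracSpan _ _ (i := ()) hφc)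

variable (M a)

lemma isUnit_algebraMap_away_of_mem_dilSubmonoid {y : A}
    (hy : y ∈ dilSubmonoid fun _ : Unit => a) :
    IsUnit (algebraMap A (Localization.Away (Ideal.Quotient.mk M a)) y) := by
  refine Submonoid.closure_le (S := (IsUnit.submonoid _).comap (algebraMap A _)).2 ?_ hy
  rintro _ ⟨_, rfl⟩
  rw [SetLike.mem_coe, Submonoid.mem_comap, IsScalarTower.algebraMap_apply A (A ⧸ M),
    Ideal.Quotient.algebraMap_eq]
  exact IsLocalization.Away.algebraMap_isUnit _

def localizationToAway : Localization (dilSubmonoid fun _ : Unit => a) →ₐ[A]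
    Localization.Away (Ideal.Quotient.mk M a) :=
  IsLocalization.liftAlgHom (f := Algebra.ofId A _)
    fun y => isUnit_algebraMap_away_of_mem_dilSubmonoid M a y.2

variable {M a}

lemma localizationToAway_dilFrac {m : A} (hm : m ∈ M) :
    localizationToAway M a (dilFrac (fun _ : Unit => a) () m) = 0 := by
  have hmul := congrArg (localizationToAway M a) (algebraMap_mul_dilFrac (fun _ : Unit => a) () m)
  rw [map_mul, AlgHom.commutes, AlgHom.commutes, IsScalarTower.algebraMap_apply A (A ⧸ M) _ m,
    Ideal.Quotient.algebraMap_eq, Ideal.Quotient.eq_zero_iff_mem.2 hm, map_zero] at hmul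
  have ha := isUnit_algebraMap_away_of_mem_dilSubmonoid M a (a_mem_dilSubmonoid _ ())
  exact ha.mul_right_eq_zero.1 hmul

lemma monoDilatation_le_comap_range :
    monoDilatation M a ≤ (IsScalarTower.toAlgHom A (A ⧸ M)
      (Localization.Away (Ideal.Quotient.mk M a))).range.comap (localizationToAway M a) := by
  refine Algebra.adjoin_le (Set.iUnion_subset fun i => ?_)
  rintro _ ⟨m, hm, rfl⟩
  simp only [SetLike.mem_coe, Subalgebra.mem_comap, localizationToAway_dilFrac hm]
  exact zero_mem _

def monoDilatationToQuotient (h : Ideal.Quotient.mk M a ∈ nonZeroDivisors (A ⧸ M)) :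
    monoDilatation M a →ₐ[A] A ⧸ M :=
  (AlgEquiv.ofInjective _ (IsLocalization.injective (Localization.Away (Ideal.Quotient.mk M a))
    (Submonoid.powers_le.2 h))).symm.toAlgHom.comp
    (((localizationToAway M a).comp (monoDilatation M a).val).codRestrict _
      fun x => monoDilatation_le_comap_range x.2)

end MonoCenter

/-- for a mono-center `[M, a]` with `a` a non-zero-divisor mod `M`, there is a
unique `A`-algebra morphism `φ : A[M/a] → A/M`, and its kernel is the ideal generated by the
fractions `{m/a : m ∈ M}`. -/
theorem stmt15 (M : Ideal A) (a : A)
    (h : Ideal.Quotient.mk M a ∈ nonZeroDivisors (A ⧸ M)) :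
    ∃ φ : ↥(dilatation (fun _ : Unit => M) (fun _ : Unit => a)) →ₐ[A] A ⧸ M,
      (∀ φ', φ' = φ) ∧
      RingHom.ker φ = Ideal.span
        {x : ↥(dilatation (fun _ : Unit => M) (fun _ : Unit => a)) | ∃ m ∈ M,
          (x : Localization (dilSubmonoid fun _ : Unit => a))
            = dilFrac (fun _ : Unit => a) () m} := by
  refine ⟨monoDilatationToQuotient h, fun φ' => algHom_ext_of_dilFracSpan_le_ker _ _
    (dilFracSpan_le_ker_quotient h φ') (dilFracSpan_le_ker_quotient h _), ?_⟩
  rw [ker_eq_dilFracSpan h, dilFracSpan]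
  simp only [Unique.exists_iff]
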